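/- Let (Ω, 𝓕, P) be a probability space and 𝓖 ⊆ 𝓕 a sub-σ-algebra. Let θ₁, …, θₙ be integrable real random variables with conditional expectations θᵢ* = E[θᵢ | 𝓖], and let θ̂₁, …, θ̂ₙ be 𝓖-measurable real random variables with each θ̂ᵢ − θᵢ* square-integrable. Fix an integer 1 ≤ m ≤ n, and let δ₁*, …, δₙ* and δ̂₁, …, δ̂ₙ be 𝓖-measurable {0,1}-valued random variables such that almost surely Σᵢ δᵢ* = m, Σᵢ δ̂ᵢ = m, whenever δᵢ* = 1 and δⱼ* = 0 one has θᵢ* ≥ θⱼ* (δ* selects m indices with the largest values of θ*), and whenever δ̂ᵢ = 1 and δ̂ⱼ = 0 one has θ̂ᵢ ≥ θ̂ⱼ (δ̂ selects m indices with the largest values of θ̂). Then E[(1/m) Σᵢ₌₁ⁿ (δᵢ* − δ̂ᵢ) θᵢ] ≤ 2√(n/m) · (E[(1/n) Σᵢ₌₁ⁿ (θ̂ᵢ − θᵢ*)²])^{1/2}. -/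

import Mathlib

/-!
Conditioning on `𝓖` replaces `θᵢ` by `θᵢ*`, since both selections are `𝓖`-measurable. Pointwise,
`Σᵢ (δᵢ* - δ̂ᵢ) θᵢ* = Σᵢ (δ̂ᵢ - δᵢ*)(θ̂ᵢ - θᵢ*) + Σᵢ (δᵢ* - δ̂ᵢ) θ̂ᵢ`; the last sum is `≤ 0` because
`δ̂` picks the top `m` values of `θ̂` and `δ*` picks some `m` indices, and the first is at most
`√(2m) ‖θ̂ - θ*‖₂` by Cauchy–Schwarz, as `δ̂ - δ*` has at most `2m` nonzero entries, all `±1`.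
Jensen's inequality for `√` then moves the expectation inside the root.
-/

open MeasureTheory

section Selection

variable {ι : Type*}

theorem exists_threshold_of_selects_top [Finite ι] {b h : ι → ℝ}
    (htop : ∀ i j, b i = 1 → b j = 0 → h j ≤ h i) :
    ∃ c, ∀ i, (b i = 0 → h i ≤ c) ∧ (b i = 1 → c ≤ h i) := by
  by_cases hS : ∃ j, b j = 0
  · obtain ⟨j, hj⟩ := hS
    have hfin : (h '' {j | b j = 0}).Finite := (Set.toFinite _).image h
    refine ⟨sSup (h '' {j | b j = 0}), fun i => ⟨fun hi => ?_, fun hi => ?_⟩⟩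
    · exact le_csSup hfin.bddAbove ⟨i, hi, rfl⟩
    · exact csSup_le ⟨h j, j, hj, rfl⟩ fun _ ⟨k, hk, hki⟩ => hki ▸ htop i k hi hk
  · push Not at hS
    obtain ⟨c, hc⟩ := (Set.finite_range h).bddBelow
    exact ⟨c, fun i => ⟨fun hi => absurd hi (hS i), fun _ => hc ⟨i, rfl⟩⟩⟩

variable [Fintype ι] {a b h t : ι → ℝ}

theorem sum_sub_mul_nonpos_of_selects_top (ha : ∀ i, a i = 0 ∨ a i = 1)
    (hb : ∀ i, b i = 0 ∨ b i = 1) (hab : ∑ i, a i = ∑ i, b i)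
    (htop : ∀ i j, b i = 1 → b j = 0 → h j ≤ h i) :
    ∑ i, (a i - b i) * h i ≤ 0 := by
  obtain ⟨c, hc⟩ := exists_threshold_of_selects_top htop
  have hshift : ∑ i, (a i - b i) * h i = ∑ i, (a i - b i) * (h i - c) := by
    simp only [mul_sub, Finset.sum_sub_distrib, ← Finset.sum_mul, hab, sub_self, zero_mul,
      sub_zero]
  rw [hshift]
  refine Finset.sum_nonpos fun i _ => ?_
  rcases hb i with hbi | hbi
  · refine mul_nonpos_of_nonneg_of_nonpos ?_ (sub_nonpos.2 ((hc i).1 hbi))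
    rcases ha i with hai | hai <;> simp [hai, hbi]
  · refine mul_nonpos_of_nonpos_of_nonneg ?_ (sub_nonneg.2 ((hc i).2 hbi))
    rcases ha i with hai | hai <;> simp [hai, hbi]

theorem sum_sq_sub_le_two_mul {m : ℝ} (ha : ∀ i, a i = 0 ∨ a i = 1)
    (hb : ∀ i, b i = 0 ∨ b i = 1) (hsa : ∑ i, a i = m) (hsb : ∑ i, b i = m) :
    ∑ i, (b i - a i) ^ 2 ≤ 2 * m :=
  calc ∑ i, (b i - a i) ^ 2 ≤ ∑ i, (a i + b i) := by
        refine Finset.sum_le_sum fun i _ => ?_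
        rcases ha i with hai | hai <;> rcases hb i with hbi | hbi <;> norm_num [hai, hbi]
    _ = 2 * m := by rw [Finset.sum_add_distrib, hsa, hsb, two_mul]

theorem sum_sub_mul_le_sqrt_mul_sqrt_of_selects_top {m : ℝ} (ha : ∀ i, a i = 0 ∨ a i = 1)
    (hb : ∀ i, b i = 0 ∨ b i = 1) (hsa : ∑ i, a i = m) (hsb : ∑ i, b i = m)
    (htop : ∀ i j, b i = 1 → b j = 0 → h j ≤ h i) :
    ∑ i, (a i - b i) * t i ≤ √(2 * m) * √(∑ i, (h i - t i) ^ 2) :=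
  calc ∑ i, (a i - b i) * t i
      = ∑ i, (b i - a i) * (h i - t i) + ∑ i, (a i - b i) * h i := by
        rw [← Finset.sum_add_distrib]; congr 1 with i; ring
    _ ≤ ∑ i, (b i - a i) * (h i - t i) := by
        linarith [sum_sub_mul_nonpos_of_selects_top ha hb (hsa.trans hsb.symm) htop]
    _ ≤ √(∑ i, (b i - a i) ^ 2) * √(∑ i, (h i - t i) ^ 2) := Real.sum_mul_le_sqrt_mul_sqrt _ _ _
    _ ≤ √(2 * m) * √(∑ i, (h i - t i) ^ 2) := by
        gcongr; exact sum_sq_sub_le_two_mul ha hb hsa hsb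

end Selection

section Integration

variable {Ω : Type*} {m mΩ : MeasurableSpace Ω} {μ : Measure Ω}

theorem integral_sum_mul_condExp_of_bound {ι : Type*} [Fintype ι] [IsFiniteMeasure μ]
    (hm : m ≤ mΩ) {g f : ι → Ω → ℝ} (C : ℝ) (hg : ∀ i, StronglyMeasurable[m] (g i))
    (hgC : ∀ i, ∀ᵐ ω ∂μ, ‖g i ω‖ ≤ C) (hf : ∀ i, Integrable (f i) μ) :
    ∫ ω, ∑ i, g i ω * f i ω ∂μ = ∫ ω, ∑ i, g i ω * μ[f i | m] ω ∂μ := by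
  have hgμ : ∀ i, AEStronglyMeasurable (g i) μ := fun i => ((hg i).mono hm).aestronglyMeasurable
  rw [integral_finsetSum _ fun i _ => (hf i).bdd_mul (hgμ i) (hgC i),
    integral_finsetSum _ fun i _ => integrable_condExp.bdd_mul (hgμ i) (hgC i)]
  refine Finset.sum_congr rfl fun i _ => ?_
  exact (integral_condExp hm).symm.trans
    (integral_congr_ae (condExp_stronglyMeasurable_mul_of_bound hm (hg i) (hf i) C (hgC i)))

theorem MeasureTheory.Integrable.sqrt [IsFiniteMeasure μ] {F : Ω → ℝ} (hF : Integrable F μ)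
    (hF0 : 0 ≤ᵐ[μ] F) : Integrable (fun ω => √(F ω)) μ := by
  refine ((memLp_two_iff_integrable_sq ?_).2 ?_).integrable one_le_two
  · exact Real.continuous_sqrt.comp_aestronglyMeasurable hF.aestronglyMeasurable
  · exact hF.congr (hF0.mono fun ω hω => (Real.sq_sqrt hω).symm)

theorem integral_sqrt_le_sqrt_integral [IsProbabilityMeasure μ] {F : Ω → ℝ}
    (hF : Integrable F μ) (hF0 : 0 ≤ᵐ[μ] F) : ∫ ω, √(F ω) ∂μ ≤ √(∫ ω, F ω ∂μ) :=
  Real.strictConcaveOn_sqrt.concaveOn.le_map_integral Real.continuous_sqrt.continuousOn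
    isClosed_Ici hF0 hF (hF.sqrt hF0)

end Integration

theorem one_div_mul_sqrt_two_mul_mul_sqrt_le {m n S : ℝ} (hm : 0 < m) (hn : 0 < n)
    (hS : 0 ≤ S) : 1 / m * (√(2 * m) * √S) ≤ 2 * √(n / m) * √(1 / n * S) := by
  refine le_of_pow_le_pow_left₀ two_ne_zero (by positivity) ?_
  simp only [mul_pow, div_pow, one_pow]
  rw [Real.sq_sqrt (by positivity), Real.sq_sqrt hS, Real.sq_sqrt (by positivity),
    Real.sq_sqrt (by positivity)]
  field_simp
  nlinarith

theorem top_m_selection_regret_le_general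
    {Ω : Type*} [𝓕 : MeasurableSpace Ω] (μ : Measure Ω) [IsProbabilityMeasure μ]
    (𝓖 : MeasurableSpace Ω) (h𝓖 : 𝓖 ≤ 𝓕)
    (n : ℕ) (hn : 1 ≤ n)
    (θ : Fin n → Ω → ℝ) (hθ : ∀ i, Integrable (θ i) μ)
    (θhat : Fin n → Ω → ℝ)
    (hL2 : ∀ i, MemLp (fun ω => θhat i ω - (μ[θ i | 𝓖]) ω) 2 μ)
    (m : ℕ) (hm : 1 ≤ m)
    (δstar δhat : Fin n → Ω → ℝ)
    (hδstar_meas : ∀ i, Measurable[𝓖] (δstar i))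
    (hδhat_meas : ∀ i, Measurable[𝓖] (δhat i))
    (hδstar01 : ∀ᵐ ω ∂μ, ∀ i, δstar i ω = 0 ∨ δstar i ω = 1)
    (hδhat01 : ∀ᵐ ω ∂μ, ∀ i, δhat i ω = 0 ∨ δhat i ω = 1)
    (hδstar_sum : ∀ᵐ ω ∂μ, ∑ i, δstar i ω = m)
    (hδhat_sum : ∀ᵐ ω ∂μ, ∑ i, δhat i ω = m)
    (hδhat_top : ∀ᵐ ω ∂μ, ∀ i j, δhat i ω = 1 → δhat j ω = 0 →
      θhat j ω ≤ θhat i ω) :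
    ∫ ω, (1 / m : ℝ) * ∑ i, ((δstar i ω - δhat i ω) * θ i ω) ∂μ
      ≤ 2 * Real.sqrt ((n : ℝ) / m) *
        (∫ ω, (1 / n : ℝ) * ∑ i, (θhat i ω - (μ[θ i | 𝓖]) ω) ^ 2 ∂μ) ^ ((1:ℝ)/2) := by
  set F : Ω → ℝ := fun ω => ∑ i, (θhat i ω - (μ[θ i | 𝓖]) ω) ^ 2
  have hF : Integrable F μ := integrable_finsetSum _ fun i _ => (hL2 i).integrable_sq
  have hF0 : 0 ≤ᵐ[μ] F := ae_of_all _ fun ω => Finset.sum_nonneg fun i _ => sq_nonneg _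
  have hg : ∀ i, StronglyMeasurable[𝓖] (fun ω => δstar i ω - δhat i ω) := fun i =>
    ((hδstar_meas i).sub (hδhat_meas i)).stronglyMeasurable
  have hg_le : ∀ i, ∀ᵐ ω ∂μ, ‖δstar i ω - δhat i ω‖ ≤ 1 := fun i => by
    filter_upwards [hδstar01, hδhat01] with ω ha hb
    rcases ha i with ha | ha <;> rcases hb i with hb | hb <;> norm_num [ha, hb]
  have hregret : ∀ᵐ ω ∂μ, ∑ i, (δstar i ω - δhat i ω) * (μ[θ i | 𝓖]) ω ≤ √(2 * m) * √(F ω) := by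
    filter_upwards [hδstar01, hδhat01, hδstar_sum, hδhat_sum, hδhat_top] with ω h1 h2 h3 h4 h5
    exact sum_sub_mul_le_sqrt_mul_sqrt_of_selects_top h1 h2 h3 h4 h5
  have hregret_int : Integrable (fun ω => ∑ i, (δstar i ω - δhat i ω) * (μ[θ i | 𝓖]) ω) μ :=
    integrable_finsetSum _ fun i _ =>
      integrable_condExp.bdd_mul ((hg i).mono h𝓖).aestronglyMeasurable (hg_le i)
  rw [integral_const_mul, integral_sum_mul_condExp_of_bound h𝓖 1 hg hg_le hθ, integral_const_mul,
    ← Real.sqrt_eq_rpow]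
  calc 1 / (m : ℝ) * ∫ ω, ∑ i, (δstar i ω - δhat i ω) * (μ[θ i | 𝓖]) ω ∂μ
      ≤ 1 / m * (√(2 * m) * ∫ ω, √(F ω) ∂μ) := by
        rw [← integral_const_mul √(2 * (m : ℝ))]
        exact mul_le_mul_of_nonneg_left
          (integral_mono_ae hregret_int ((hF.sqrt hF0).const_mul _) hregret) (one_div_nonneg.2 m.cast_nonneg)
    _ ≤ 1 / m * (√(2 * m) * √(∫ ω, F ω ∂μ)) := by
        gcongr; exact integral_sqrt_le_sqrt_integral hF hF0
    _ ≤ 2 * √(n / m) * √(1 / n * ∫ ω, F ω ∂μ) :=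
        one_div_mul_sqrt_two_mul_mul_sqrt_le (by exact_mod_cast hm) (by exact_mod_cast hn)
          (integral_nonneg_of_ae hF0)

/-- Bayes regret of the plug-in top-`m` selection rule (selecting the `m` largest `θ̂ᵢ`)
relative to the oracle rule (selecting the `m` largest posterior means `θᵢ* = E[θᵢ | 𝓖]`)
is bounded by `2√(n/m)` times the root mean squared error of the posterior-mean estimates. -/
theorem top_m_selection_regret_le
    {Ω : Type*} [𝓕 : MeasurableSpace Ω] (μ : Measure Ω) [IsProbabilityMeasure μ]
    (𝓖 : MeasurableSpace Ω) (h𝓖 : 𝓖 ≤ 𝓕)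
    (n : ℕ) (hn : 1 ≤ n)
    (θ : Fin n → Ω → ℝ) (hθ : ∀ i, Integrable (θ i) μ)
    (θhat : Fin n → Ω → ℝ)
    (hθhat_meas : ∀ i, Measurable[𝓖] (θhat i))
    (hL2 : ∀ i, MemLp (fun ω => θhat i ω - (μ[θ i | 𝓖]) ω) 2 μ)
    (m : ℕ) (hm : 1 ≤ m) (hmn : m ≤ n)
    (δstar δhat : Fin n → Ω → ℝ)
    (hδstar_meas : ∀ i, Measurable[𝓖] (δstar i))
    (hδhat_meas : ∀ i, Measurable[𝓖] (δhat i))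
    (hδstar01 : ∀ᵐ ω ∂μ, ∀ i, δstar i ω = 0 ∨ δstar i ω = 1)
    (hδhat01 : ∀ᵐ ω ∂μ, ∀ i, δhat i ω = 0 ∨ δhat i ω = 1)
    (hδstar_sum : ∀ᵐ ω ∂μ, ∑ i, δstar i ω = m)
    (hδhat_sum : ∀ᵐ ω ∂μ, ∑ i, δhat i ω = m)
    (hδstar_top : ∀ᵐ ω ∂μ, ∀ i j, δstar i ω = 1 → δstar j ω = 0 →
      (μ[θ j | 𝓖]) ω ≤ (μ[θ i | 𝓖]) ω)
    (hδhat_top : ∀ᵐ ω ∂μ, ∀ i j, δhat i ω = 1 → δhat j ω = 0 →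
      θhat j ω ≤ θhat i ω) :
    ∫ ω, (1 / m : ℝ) * ∑ i, ((δstar i ω - δhat i ω) * θ i ω) ∂μ
      ≤ 2 * Real.sqrt ((n : ℝ) / m) *
        (∫ ω, (1 / n : ℝ) * ∑ i, (θhat i ω - (μ[θ i | 𝓖]) ω) ^ 2 ∂μ) ^ ((1:ℝ)/2) :=
  top_m_selection_regret_le_general (𝓕 := 𝓕) μ 𝓖 h𝓖 n hn θ hθ θhat hL2 m hm δstar δhat hδstar_meas
    hδhat_meas hδstar01 hδhat01 hδstar_sum hδhat_sum hδhat_top
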